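/- arXiv:0810.1329 — 6 statements merged into one kernel-verified Lean document; each statement's English description precedes it below -/
import Mathlib

section
/- For any η > 0, 0 < ν ≤ η/2, and any real s', the Laplace-type transform of ρ^{±1} satisfies ∫_{s'}^{∞} e^{−ηz} ρ(z)^{±1} dz ≤ (8/η) exp(−η s' ± ν|s'|), where ρ(z) = 1 + exp(ν|z|). -/
/-!
For `z ≥ s'` the triangle inequality gives `|(|z| - |s'|)| ≤ z - s'`, so
`ρ(z)^{±1} ≤ 2 exp(±ν|s'|) exp(ν (z - s'))`. Hence the integrand is dominated by a
multiple of `exp(-(η - ν) z)`, whose integral over `(s', ∞)` contributes the factor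
`1 / (η - ν) ≤ 2 / η`.
-/

open MeasureTheory Set Real

lemma abs_abs_sub_abs_le_sub {s z : ℝ} (hsz : s ≤ z) : |(|z| - |s|)| ≤ z - s := by
  simpa [abs_of_nonneg (sub_nonneg.mpr hsz)] using abs_abs_sub_abs_le_abs_sub z s

lemma exp_mul_abs_le {ν s z : ℝ} (hν : 0 ≤ ν) (hsz : s ≤ z) :
    exp (ν * |z|) ≤ exp (ν * |s|) * exp (ν * (z - s)) := by
  rw [← exp_add, exp_le_exp, ← mul_add]
  exact mul_le_mul_of_nonneg_left
    (by linarith [le_abs_self (|z| - |s|), abs_abs_sub_abs_le_sub hsz]) hν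

lemma exp_neg_mul_abs_le {ν s z : ℝ} (hν : 0 ≤ ν) (hsz : s ≤ z) :
    exp (-(ν * |z|)) ≤ exp (-(ν * |s|)) * exp (ν * (z - s)) := by
  rw [← exp_add, exp_le_exp, neg_mul_eq_mul_neg, neg_mul_eq_mul_neg, ← mul_add]
  exact mul_le_mul_of_nonneg_left
    (by linarith [neg_abs_le (|z| - |s|), abs_abs_sub_abs_le_sub hsz]) hν

lemma one_add_exp_le_two_mul_exp {x : ℝ} (hx : 0 ≤ x) : 1 + exp x ≤ 2 * exp x := by
  linarith [one_le_exp hx]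

lemma inv_one_add_exp_le_exp_neg (x : ℝ) : (1 + exp x)⁻¹ ≤ exp (-x) := by
  rw [exp_neg]
  exact inv_anti₀ (exp_pos x) (by linarith [exp_pos x])

lemma setIntegral_exp_neg_mul_le {η ν s C : ℝ} {f : ℝ → ℝ} (hνη : ν < η)
    (hf : ∀ z ∈ Ioi s, 0 ≤ f z ∧ f z ≤ C * exp (ν * (z - s))) :
    ∫ z in Ioi s, exp (-η * z) * f z ≤ C * exp (-η * s) / (η - ν) := by
  have hdecay : ν - η < 0 := by linarith
  have hbound :
      ∀ z ∈ Ioi s, exp (-η * z) * f z ≤ C * exp (-ν * s) * exp ((ν - η) * z) := by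
    intro z hz
    calc exp (-η * z) * f z ≤ exp (-η * z) * (C * exp (ν * (z - s))) :=
          mul_le_mul_of_nonneg_left (hf z hz).2 (exp_pos _).le
      _ = C * exp (-ν * s) * exp ((ν - η) * z) := by
          rw [mul_assoc, ← exp_add, mul_left_comm, ← exp_add]; ring_nf
  calc ∫ z in Ioi s, exp (-η * z) * f z
      ≤ ∫ z in Ioi s, C * exp (-ν * s) * exp ((ν - η) * z) := by
        refine integral_mono_of_nonneg ?_ ((integrableOn_exp_mul_Ioi hdecay s).const_mul _) ?_
        · exact (ae_restrict_iff' measurableSet_Ioi).mpr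
            (ae_of_all _ fun z hz => mul_nonneg (exp_pos _).le (hf z hz).1)
        · exact (ae_restrict_iff' measurableSet_Ioi).mpr (ae_of_all _ hbound)
    _ = C * exp (-η * s) / (η - ν) := by
        have hexp : exp (-ν * s) * exp ((ν - η) * s) = exp (-η * s) := by
          rw [← exp_add]; ring_nf
        rw [integral_const_mul, integral_exp_mul_Ioi hdecay, neg_div, ← div_neg, neg_sub,
          mul_div_assoc', mul_assoc, hexp]

lemma div_sub_le_two_mul_div {η ν a : ℝ} (hη : 0 < η) (hν : ν ≤ η / 2) (ha : 0 ≤ a) :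
    a / (η - ν) ≤ 2 * a / η := by
  rw [div_le_div_iff₀ (by linarith) hη]
  nlinarith

theorem laplace_rho_bounds_general (η ν s' : ℝ) (hν0 : 0 < ν) (hν : ν ≤ η / 2) :
    (∫ z in Ioi s', Real.exp (-η * z) * (1 + Real.exp (ν * |z|))) ≤
        8 / η * Real.exp (-η * s' + ν * |s'|) ∧
    (∫ z in Ioi s', Real.exp (-η * z) * (1 + Real.exp (ν * |z|))⁻¹) ≤
        8 / η * Real.exp (-η * s' - ν * |s'|) := by
  have hη : 0 < η := by linarith
  have hνη : ν < η := by linarith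
  constructor
  · calc _ ≤ 2 * exp (ν * |s'|) * exp (-η * s') / (η - ν) := by
          refine setIntegral_exp_neg_mul_le hνη fun z hz => ⟨by positivity, ?_⟩
          calc 1 + exp (ν * |z|) ≤ 2 * exp (ν * |z|) :=
                one_add_exp_le_two_mul_exp (by positivity)
            _ ≤ 2 * exp (ν * |s'|) * exp (ν * (z - s')) := by
                rw [mul_assoc]; gcongr; exact exp_mul_abs_le hν0.le (le_of_lt hz)
      _ ≤ 2 * (2 * (exp (ν * |s'|) * exp (-η * s'))) / η := by
          rw [mul_assoc]; exact div_sub_le_two_mul_div hη hν (by positivity)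
      _ ≤ 8 / η * exp (-η * s' + ν * |s'|) := by
          rw [add_comm, exp_add, div_mul_eq_mul_div]
          refine div_le_div_of_nonneg_right ?_ hη.le
          linarith [mul_pos (exp_pos (ν * |s'|)) (exp_pos (-η * s'))]
  · calc _ ≤ exp (-(ν * |s'|)) * exp (-η * s') / (η - ν) := by
          refine setIntegral_exp_neg_mul_le hνη fun z hz => ⟨by positivity, ?_⟩
          exact (inv_one_add_exp_le_exp_neg _).trans (exp_neg_mul_abs_le hν0.le (le_of_lt hz))
      _ ≤ 2 * (exp (-(ν * |s'|)) * exp (-η * s')) / η :=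
          div_sub_le_two_mul_div hη hν (by positivity)
      _ ≤ 8 / η * exp (-η * s' - ν * |s'|) := by
          rw [sub_eq_neg_add, exp_add, div_mul_eq_mul_div]
          refine div_le_div_of_nonneg_right ?_ hη.le
          linarith [mul_pos (exp_pos (-(ν * |s'|))) (exp_pos (-η * s'))]

/-- Laplace-type transform bounds for the weight `ρ(z) = 1 + exp(ν|z|)` and its reciprocal:
for `η > 0` and `0 < ν ≤ η/2`,
`∫_{s'}^∞ e^{−ηz} ρ(z)^{±1} dz ≤ (8/η) exp(−η s' ± ν|s'|)`. -/
theorem laplace_rho_bounds (η ν s' : ℝ) (hη : 0 < η) (hν0 : 0 < ν) (hν : ν ≤ η / 2) :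
    (∫ z in Ioi s', Real.exp (-η * z) * (1 + Real.exp (ν * |z|))) ≤
        8 / η * Real.exp (-η * s' + ν * |s'|) ∧
    (∫ z in Ioi s', Real.exp (-η * z) * (1 + Real.exp (ν * |z|))⁻¹) ≤
        8 / η * Real.exp (-η * s' - ν * |s'|) :=
  laplace_rho_bounds_general η ν s' hν0 hν
end

section
/- Let α, β, a, b be measurable functions on [s',∞) satisfying |α(u)| ≤ α₀ e^{α₁ u}, |β(u)| ≤ β₀ e^{β₁ u}, |a(u)| ≤ a₀ e^{−a₁ u}, |b(u)| ≤ b₀ e^{−b₁ u} for u ≥ s'. Let D(u,v) = α(u) β(v) ∫_0^∞ a(u+z) b(v+z) dz. If L(ρ₁^{−1}) and L(ρ₂) converge for t > c and 2(a₁−α₁) > c, 2(b₁−β₁) > c, then the Hilbert–Schmidt norm of the operator with kernel D from L²([s',∞), ρ₁) to L²([s',∞), ρ₂) satisfies ‖D‖₂ ≤ (α₀β₀a₀b₀/(a₁+b₁)) · { L(ρ₂)[2(a₁−α₁)] · L(ρ₁^{−1})[2(b₁−β₁)] }^{1/2}. -/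
open MeasureTheory Set

lemma aux_integral_exp_neg_mul {c : ℝ} (hc : 0 < c) :
    ∫ z in Ioi (0 : ℝ), Real.exp (-(c * z)) = c⁻¹ := by
  have := integral_comp_mul_left_Ioi (fun x => Real.exp (-x)) 0 hc
  simp only [mul_zero, Real.exp_zero, smul_eq_mul] at this
  rw [this, integral_exp_neg_Ioi]
  simp

lemma aux_setIntegral_le {s : Set ℝ} (hs : MeasurableSet s) {f g : ℝ → ℝ}
    (hg : IntegrableOn g s) (hgnn : ∀ x ∈ s, 0 ≤ g x) (h : ∀ x ∈ s, f x ≤ g x) :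
    ∫ x in s, f x ≤ ∫ x in s, g x := by
  by_cases hf : IntegrableOn f s
  · exact setIntegral_mono_on hf hg hs h
  · rw [integral_undef hf]
    exact setIntegral_nonneg hs hgnn

/-- Hilbert–Schmidt norm bound for a kernel of convolution type:
if `|α(u)| ≤ α₀ e^{α₁u}`, `|β(u)| ≤ β₀ e^{β₁u}`, `|a(u)| ≤ a₀ e^{−a₁u}`, `|b(u)| ≤ b₀ e^{−b₁u}`
on `[s',∞)` and `D(u,v) = α(u)β(v)∫_0^∞ a(u+z)b(v+z) dz`, then the Hilbert–Schmidt norm of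
the operator with kernel `D` from `L²([s',∞),ρ₁)` to `L²([s',∞),ρ₂)`, whose square is
`∬ |D(u,v)|² ρ₁(v)⁻¹ ρ₂(u) du dv`, is bounded by
`(α₀β₀a₀b₀/(a₁+b₁)) √(L(ρ₂)[2(a₁−α₁)] · L(ρ₁⁻¹)[2(b₁−β₁)])`,
where `L(w)[t] = ∫_{s'}^∞ e^{−tz} w(z) dz`. -/
theorem hs_norm_diamond_bound
    (s' : ℝ) (α β a b ρ₁ ρ₂ : ℝ → ℝ)
    (α₀ α₁ β₀ β₁ a₀ a₁ b₀ b₁ c : ℝ)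
    (hρ₁ : ∀ u, 0 < ρ₁ u) (hρ₂ : ∀ u, 0 < ρ₂ u)
    (hα₀ : 0 ≤ α₀) (hβ₀ : 0 ≤ β₀) (ha₀ : 0 ≤ a₀) (hb₀ : 0 ≤ b₀)
    (ha₁b₁ : 0 < a₁ + b₁)
    (hα : ∀ u ≥ s', |α u| ≤ α₀ * Real.exp (α₁ * u))
    (hβ : ∀ u ≥ s', |β u| ≤ β₀ * Real.exp (β₁ * u))
    (ha : ∀ u ≥ s', |a u| ≤ a₀ * Real.exp (-a₁ * u))
    (hb : ∀ u ≥ s', |b u| ≤ b₀ * Real.exp (-b₁ * u))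
    (hL₂ : ∀ t > c, IntegrableOn (fun z => Real.exp (-t * z) * ρ₂ z) (Ioi s'))
    (hL₁ : ∀ t > c, IntegrableOn (fun z => Real.exp (-t * z) * (ρ₁ z)⁻¹) (Ioi s'))
    (hca : c < 2 * (a₁ - α₁)) (hcb : c < 2 * (b₁ - β₁)) :
    Real.sqrt (∫ u in Ioi s', ∫ v in Ioi s',
        (α u * β v * ∫ z in Ioi (0 : ℝ), a (u + z) * b (v + z)) ^ 2 * (ρ₁ v)⁻¹ * ρ₂ u) ≤
      α₀ * β₀ * a₀ * b₀ / (a₁ + b₁) *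
        Real.sqrt ((∫ z in Ioi s', Real.exp (-(2 * (a₁ - α₁)) * z) * ρ₂ z) *
          (∫ z in Ioi s', Real.exp (-(2 * (b₁ - β₁)) * z) * (ρ₁ z)⁻¹)) := by
  set A : ℝ := 2 * (a₁ - α₁) with hA
  set B : ℝ := 2 * (b₁ - β₁) with hB
  set K : ℝ := α₀ * β₀ * a₀ * b₀ / (a₁ + b₁) with hKdef
  have hK : 0 ≤ K := div_nonneg (by positivity) ha₁b₁.le
  set L₂ : ℝ := ∫ z in Ioi s', Real.exp (-A * z) * ρ₂ z with hL2def
  set L₁ : ℝ := ∫ z in Ioi s', Real.exp (-B * z) * (ρ₁ z)⁻¹ with hL1def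
  have h2 : IntegrableOn (fun z => Real.exp (-A * z) * ρ₂ z) (Ioi s') := hL₂ A hca
  have h1 : IntegrableOn (fun z => Real.exp (-B * z) * (ρ₁ z)⁻¹) (Ioi s') := hL₁ B hcb
  have hL1nn : 0 ≤ L₁ := setIntegral_nonneg measurableSet_Ioi fun z _ =>
    mul_nonneg (Real.exp_nonneg _) (inv_nonneg.mpr (hρ₁ z).le)
  have hL2nn : 0 ≤ L₂ := setIntegral_nonneg measurableSet_Ioi fun z _ =>
    mul_nonneg (Real.exp_nonneg _) (hρ₂ z).le
  -- bound for the inner convolution integral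
  have hI : ∀ u ∈ Ioi s', ∀ v ∈ Ioi s',
      |∫ z in Ioi (0 : ℝ), a (u + z) * b (v + z)| ≤
        a₀ * b₀ / (a₁ + b₁) * (Real.exp (-a₁ * u) * Real.exp (-b₁ * v)) := by
    intro u hu v hv
    set C : ℝ := a₀ * b₀ * (Real.exp (-a₁ * u) * Real.exp (-b₁ * v)) with hCdef
    have hGint : Integrable (fun z => C * Real.exp (-(a₁ + b₁) * z))
        (volume.restrict (Ioi (0 : ℝ))) := (exp_neg_integrableOn_Ioi 0 ha₁b₁).const_mul C
    have hbound : ∀ᵐ z ∂(volume.restrict (Ioi (0 : ℝ))),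
        ‖a (u + z) * b (v + z)‖ ≤ C * Real.exp (-(a₁ + b₁) * z) := by
      rw [ae_restrict_iff' measurableSet_Ioi]
      filter_upwards with z hz
      have huz : u + z ≥ s' := by have := hu.out; have := hz.out; linarith
      have hvz : v + z ≥ s' := by have := hv.out; have := hz.out; linarith
      have h1 : ‖a (u + z) * b (v + z)‖ ≤
          (a₀ * Real.exp (-a₁ * (u + z))) * (b₀ * Real.exp (-b₁ * (v + z))) := by
        rw [norm_mul]
        exact mul_le_mul (ha _ huz) (hb _ hvz) (abs_nonneg _) (by positivity)
      refine h1.trans_eq ?_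
      rw [hCdef, show -a₁ * (u + z) = -a₁ * u + -a₁ * z by ring,
        show -b₁ * (v + z) = -b₁ * v + -b₁ * z by ring,
        show -(a₁ + b₁) * z = -a₁ * z + -b₁ * z by ring,
        Real.exp_add, Real.exp_add, Real.exp_add]
      ring
    have hle := norm_integral_le_of_norm_le hGint hbound
    rw [Real.norm_eq_abs] at hle
    refine hle.trans_eq ?_
    rw [integral_const_mul]
    have : ∫ z in Ioi (0 : ℝ), Real.exp (-(a₁ + b₁) * z) = (a₁ + b₁)⁻¹ := by
      simp only [neg_mul]
      exact aux_integral_exp_neg_mul ha₁b₁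
    rw [this, hCdef]
    field_simp
  -- pointwise bound of the double integrand
  have hpt : ∀ u ∈ Ioi s', ∀ v ∈ Ioi s',
      (α u * β v * ∫ z in Ioi (0 : ℝ), a (u + z) * b (v + z)) ^ 2 * (ρ₁ v)⁻¹ * ρ₂ u ≤
        K ^ 2 * (Real.exp (-A * u) * ρ₂ u) * (Real.exp (-B * v) * (ρ₁ v)⁻¹) := by
    intro u hu v hv
    set I : ℝ := ∫ z in Ioi (0 : ℝ), a (u + z) * b (v + z) with hIdef
    set M : ℝ := (α₀ * Real.exp (α₁ * u)) * (β₀ * Real.exp (β₁ * v)) *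
        (a₀ * b₀ / (a₁ + b₁) * (Real.exp (-a₁ * u) * Real.exp (-b₁ * v))) with hMdef
    have hM : |α u * β v * I| ≤ M := by
      rw [abs_mul, abs_mul]
      exact mul_le_mul (mul_le_mul (hα u (le_of_lt hu)) (hβ v (le_of_lt hv))
        (abs_nonneg _) (by positivity)) (hI u hu v hv) (abs_nonneg _) (by positivity)
    have hsq : (α u * β v * I) ^ 2 ≤ M ^ 2 := by
      rw [← sq_abs]
      exact pow_le_pow_left₀ (abs_nonneg _) hM 2
    have e1 : (Real.exp (α₁ * u) * Real.exp (-a₁ * u)) ^ 2 = Real.exp (-A * u) := by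
      rw [← Real.exp_add, sq, ← Real.exp_add]
      congr 1; rw [hA]; ring
    have e2 : (Real.exp (β₁ * v) * Real.exp (-b₁ * v)) ^ 2 = Real.exp (-B * v) := by
      rw [← Real.exp_add, sq, ← Real.exp_add]
      congr 1; rw [hB]; ring
    calc (α u * β v * I) ^ 2 * (ρ₁ v)⁻¹ * ρ₂ u
        ≤ M ^ 2 * (ρ₁ v)⁻¹ * ρ₂ u := by
          have h₁ : 0 ≤ (ρ₁ v)⁻¹ := (inv_pos.mpr (hρ₁ v)).le
          have h₂ : 0 ≤ ρ₂ u := (hρ₂ u).le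
          gcongr
      _ = K ^ 2 * (Real.exp (-A * u) * ρ₂ u) * (Real.exp (-B * v) * (ρ₁ v)⁻¹) := by
          rw [← e1, ← e2, hMdef, hKdef]
          ring
  -- integrate in v for fixed u
  have hinner : ∀ u ∈ Ioi s',
      (∫ v in Ioi s',
        (α u * β v * ∫ z in Ioi (0 : ℝ), a (u + z) * b (v + z)) ^ 2 * (ρ₁ v)⁻¹ * ρ₂ u) ≤
        K ^ 2 * L₁ * (Real.exp (-A * u) * ρ₂ u) := by
    intro u hu
    have := aux_setIntegral_le (f := fun v =>
        (α u * β v * ∫ z in Ioi (0 : ℝ), a (u + z) * b (v + z)) ^ 2 * (ρ₁ v)⁻¹ * ρ₂ u)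
      (g := fun v => (K ^ 2 * (Real.exp (-A * u) * ρ₂ u)) * (Real.exp (-B * v) * (ρ₁ v)⁻¹))
      measurableSet_Ioi (h1.const_mul _)
      (fun v _ => mul_nonneg (mul_nonneg (sq_nonneg K)
        (mul_nonneg (Real.exp_nonneg _) (hρ₂ u).le))
        (mul_nonneg (Real.exp_nonneg _) (inv_nonneg.mpr (hρ₁ v).le)))
      (fun v hv => by simpa [mul_assoc] using hpt u hu v hv)
    refine this.trans_eq ?_
    rw [integral_const_mul, ← hL1def]
    ring
  -- integrate in u
  have houter :
      (∫ u in Ioi s', ∫ v in Ioi s',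
        (α u * β v * ∫ z in Ioi (0 : ℝ), a (u + z) * b (v + z)) ^ 2 * (ρ₁ v)⁻¹ * ρ₂ u) ≤
        K ^ 2 * (L₂ * L₁) := by
    have := aux_setIntegral_le (f := fun u => ∫ v in Ioi s',
        (α u * β v * ∫ z in Ioi (0 : ℝ), a (u + z) * b (v + z)) ^ 2 * (ρ₁ v)⁻¹ * ρ₂ u)
      (g := fun u => (K ^ 2 * L₁) * (Real.exp (-A * u) * ρ₂ u))
      measurableSet_Ioi (h2.const_mul _)
      (fun u _ => mul_nonneg (mul_nonneg (sq_nonneg K) hL1nn)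
        (mul_nonneg (Real.exp_nonneg _) (hρ₂ u).le))
      hinner
    refine this.trans_eq ?_
    rw [integral_const_mul, ← hL2def]
    ring
  calc Real.sqrt (∫ u in Ioi s', ∫ v in Ioi s',
        (α u * β v * ∫ z in Ioi (0 : ℝ), a (u + z) * b (v + z)) ^ 2 * (ρ₁ v)⁻¹ * ρ₂ u)
      ≤ Real.sqrt (K ^ 2 * (L₂ * L₁)) := Real.sqrt_le_sqrt houter
    _ = K * Real.sqrt (L₂ * L₁) := by
        rw [Real.sqrt_mul (sq_nonneg K), Real.sqrt_sq hK]
end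

section
/- For x_N(s) = μ_{n,N} + s σ_{n,N} and ξ = x_N(s)/κ_N, where κ_N = (n+N+1)/2, σ_{n,N}³ satisfies κ_N/σ_{n,N}³ = (ξ₊ − ξ₋)/(4ξ₊²); consequently for any fixed r > 0 and s ≥ r², one has σ_{n,N} √f(ξ) ≥ r ξ₊/ξ = r μ_{n,N}/(μ_{n,N} + s σ_{n,N}), where f(ξ) = (ξ−ξ₊)(ξ−ξ₋)/(4ξ²). -/
/-!
Put `ξ = ξ₊ + sσ/κ`. Because `σ³ = 4ξ₊²κ/(ξ₊−ξ₋)`, the numerator of `σ²f(ξ)` is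
`σ²(ξ−ξ₊)(ξ−ξ₋) = 4ξ₊² s (ξ−ξ₋)/(ξ₊−ξ₋) ≥ 4ξ₊² s ≥ 4ξ₊² r²`, since `ξ ≥ ξ₊`.
Dividing by `4ξ²` and taking square roots gives `σ√f(ξ) ≥ rξ₊/ξ`.
-/

open Real

lemma sq_two_mul_sub_div_lt_four (n N : ℕ) :
    (2 * ((n : ℝ) - N) / ((n : ℝ) + N + 1)) ^ 2 < 4 := by
  rw [div_pow, div_lt_iff₀ (by positivity)]
  nlinarith [Nat.cast_nonneg (α := ℝ) n, Nat.cast_nonneg (α := ℝ) N]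

lemma rpow_one_third_pow_three {x : ℝ} (hx : 0 ≤ x) : (x ^ ((1 : ℝ) / 3)) ^ 3 = x := by
  rw [one_div]
  exact_mod_cast rpow_inv_natCast_pow hx (n := 3) (by norm_num)

lemma four_mul_sq_le_sq_mul_sub_mul_sub {a b κ σ r s ξ : ℝ} (hκ : 0 < κ) (hab : b < a)
    (hσ : σ ^ 3 = 4 * a ^ 2 * κ / (a - b)) (hσ0 : 0 ≤ σ) (hrs : r ^ 2 ≤ s)
    (hξ : ξ - a = s * σ / κ) :
    4 * (r * a) ^ 2 ≤ σ ^ 2 * ((ξ - a) * (ξ - b)) := by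
  have hs : 0 ≤ s := (sq_nonneg r).trans hrs
  have hab' : 0 < a - b := sub_pos.mpr hab
  have hξb : a - b ≤ ξ - b := by
    have : 0 ≤ s * σ / κ := by positivity
    linarith
  calc 4 * (r * a) ^ 2 = 4 * a ^ 2 * r ^ 2 := by ring
    _ ≤ 4 * a ^ 2 * s := by gcongr
    _ ≤ 4 * a ^ 2 * s * ((ξ - b) / (a - b)) := by
      apply le_mul_of_one_le_right (by positivity)
      rwa [one_le_div hab']
    _ = σ ^ 2 * ((ξ - a) * (ξ - b)) := by
      rw [hξ, show σ ^ 2 * (s * σ / κ * (ξ - b)) = s * σ ^ 3 / κ * (ξ - b) by ring, hσ]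
      field_simp

lemma div_le_mul_sqrt_div_four_mul_sq {c σ p ξ : ℝ} (hσ : 0 ≤ σ)
    (h : 4 * c ^ 2 ≤ σ ^ 2 * p) : c / ξ ≤ σ * √(p / (4 * ξ ^ 2)) := by
  rw [← sqrt_sq hσ, ← sqrt_mul (sq_nonneg σ)]
  apply le_sqrt_of_sq_le
  calc (c / ξ) ^ 2 = 4 * c ^ 2 / (4 * ξ ^ 2) := by
        rw [div_pow, mul_div_mul_left _ _ (by norm_num : (4 : ℝ) ≠ 0)]
    _ ≤ σ ^ 2 * p / (4 * ξ ^ 2) := by gcongr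
    _ = σ ^ 2 * (p / (4 * ξ ^ 2)) := mul_div_assoc _ _ _

theorem sqrt_f_lower_bound_general (n N : ℕ) :
    let κ : ℝ := ((n : ℝ) + N + 1) / 2
    let ω : ℝ := 2 * ((n : ℝ) - N) / ((n : ℝ) + N + 1)
    let ξp : ℝ := 2 + Real.sqrt (4 - ω ^ 2)
    let ξm : ℝ := 2 - Real.sqrt (4 - ω ^ 2)
    let f : ℝ → ℝ := fun ξ => (ξ - ξp) * (ξ - ξm) / (4 * ξ ^ 2)
    let μ : ℝ := κ * ξp
    let σ : ℝ := (4 * ξp ^ 2 * κ / (ξp - ξm)) ^ ((1 : ℝ) / 3)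
    κ / σ ^ 3 = (ξp - ξm) / (4 * ξp ^ 2) ∧
      ∀ r : ℝ, 0 < r → ∀ s : ℝ, r ^ 2 ≤ s →
        r * ξp / ((μ + s * σ) / κ) = r * μ / (μ + s * σ) ∧
        r * μ / (μ + s * σ) ≤ σ * Real.sqrt (f ((μ + s * σ) / κ)) := by
  intro κ ω ξp ξm f μ σ
  have hκ : 0 < κ := by positivity
  have hgap : ξm < ξp := by
    have : 0 < √(4 - ω ^ 2) := sqrt_pos.mpr (sub_pos.mpr (sq_two_mul_sub_div_lt_four n N))
    linarith
  have hbase : 0 ≤ 4 * ξp ^ 2 * κ / (ξp - ξm) := by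
    have := sub_pos.mpr hgap
    positivity
  have hσ3 : σ ^ 3 = 4 * ξp ^ 2 * κ / (ξp - ξm) := rpow_one_third_pow_three hbase
  have hσ : 0 ≤ σ := rpow_nonneg hbase _
  refine ⟨by rw [hσ3]; field_simp, fun r _ s hrs => ?_⟩
  have hμ : r * ξp / ((μ + s * σ) / κ) = r * μ / (μ + s * σ) := by
    rw [div_div_eq_mul_div, mul_assoc, mul_comm ξp]
  refine ⟨hμ, hμ ▸ div_le_mul_sqrt_div_four_mul_sq hσ
    (four_mul_sq_le_sq_mul_sub_mul_sub hκ hgap hσ3 hσ hrs ?_)⟩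
  field_simp
  ring

/-- Growth of `√f` past the upper turning point: with `κ_N = (n+N+1)/2`,
`ξ_± = 2 ± √(4−ω_N²)`, `f(ξ) = (ξ−ξ₊)(ξ−ξ₋)/(4ξ²)`, `μ_{n,N} = κ_N ξ₊` and
`σ_{n,N}³ = 4ξ₊²κ_N/(ξ₊−ξ₋)`, one has `κ_N/σ_{n,N}³ = (ξ₊−ξ₋)/(4ξ₊²)`, and for every
fixed `r > 0` and `s ≥ r²`, `σ_{n,N}√f(ξ) ≥ r ξ₊/ξ = r μ_{n,N}/(μ_{n,N}+sσ_{n,N})`,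
where `ξ = (μ_{n,N}+sσ_{n,N})/κ_N`. -/
theorem sqrt_f_lower_bound (n N : ℕ) (hN : 0 < N) (hn : N < n) :
    let κ : ℝ := ((n : ℝ) + N + 1) / 2
    let ω : ℝ := 2 * ((n : ℝ) - N) / ((n : ℝ) + N + 1)
    let ξp : ℝ := 2 + Real.sqrt (4 - ω ^ 2)
    let ξm : ℝ := 2 - Real.sqrt (4 - ω ^ 2)
    let f : ℝ → ℝ := fun ξ => (ξ - ξp) * (ξ - ξm) / (4 * ξ ^ 2)
    let μ : ℝ := κ * ξp
    let σ : ℝ := (4 * ξp ^ 2 * κ / (ξp - ξm)) ^ ((1 : ℝ) / 3)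
    κ / σ ^ 3 = (ξp - ξm) / (4 * ξp ^ 2) ∧
      ∀ r : ℝ, 0 < r → ∀ s : ℝ, r ^ 2 ≤ s →
        r * ξp / ((μ + s * σ) / κ) = r * μ / (μ + s * σ) ∧
        r * μ / (μ + s * σ) ≤ σ * Real.sqrt (f ((μ + s * σ) / κ)) :=
  sqrt_f_lower_bound_general n N
end

section
/- For ξ > ξ₊ > ξ₋ > 0, writing I(√f) = ∫_{ξ₊}^{ξ} √f(t) dt with f(t) = (t−ξ₊)(t−ξ₋)/(4t²), one has the bound (ξ−ξ₊)·√f(ξ)/I(√f) ≤ 9/(2(1 − ξ₋/ξ₊)), and hence √f(ξ)/I(√f) ≤ (9/(2(1−ξ₋/ξ₊)))·(ξ−ξ₊)^{−1}. -/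
open intervalIntegral

/-- For `0 < ξ₋ < ξ₊ < ξ` and `f(t) = (t−ξ₊)(t−ξ₋)/(4t²)`, with
`I(√f) = ∫_{ξ₊}^{ξ} √f(t) dt`, one has
`(ξ−ξ₊)√f(ξ)/I(√f) ≤ 9/(2(1−ξ₋/ξ₊))` and hence
`√f(ξ)/I(√f) ≤ (9/(2(1−ξ₋/ξ₊)))·(ξ−ξ₊)⁻¹`. -/
theorem sqrt_f_ratio_bound (ξm ξp ξ : ℝ) (h0 : 0 < ξm) (h1 : ξm < ξp) (h2 : ξp < ξ) :
    (ξ - ξp) * Real.sqrt ((ξ - ξp) * (ξ - ξm) / (4 * ξ ^ 2)) /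
        (∫ t in ξp..ξ, Real.sqrt ((t - ξp) * (t - ξm) / (4 * t ^ 2))) ≤
      9 / (2 * (1 - ξm / ξp)) ∧
    Real.sqrt ((ξ - ξp) * (ξ - ξm) / (4 * ξ ^ 2)) /
        (∫ t in ξp..ξ, Real.sqrt ((t - ξp) * (t - ξm) / (4 * t ^ 2))) ≤
      9 / (2 * (1 - ξm / ξp)) * (ξ - ξp)⁻¹ := by
  have hξp : 0 < ξp := h0.trans h1
  have hξ : 0 < ξ := hξp.trans h2
  set m : ℝ := (ξp + ξ) / 2 with hm
  have hpm : ξp < m := by rw [hm]; linarith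
  have hmξ : m < ξ := by rw [hm]; linarith
  set g : ℝ → ℝ := fun t => Real.sqrt ((t - ξp) * (t - ξm) / (4 * t ^ 2)) with hgdef
  have hcont : ContinuousOn g (Set.Icc ξp ξ) := by
    apply Real.continuous_sqrt.comp_continuousOn
    apply ContinuousOn.div (by fun_prop) (by fun_prop)
    intro t ht
    have : 0 < t := lt_of_lt_of_le hξp ht.1
    positivity
  have hint1 : IntervalIntegrable g MeasureTheory.volume ξp m := by
    apply ContinuousOn.intervalIntegrable
    apply hcont.mono
    rw [Set.uIcc_of_le hpm.le]
    exact Set.Icc_subset_Icc le_rfl hmξ.le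
  have hint2 : IntervalIntegrable g MeasureTheory.volume m ξ := by
    apply ContinuousOn.intervalIntegrable
    apply hcont.mono
    rw [Set.uIcc_of_le hmξ.le]
    exact Set.Icc_subset_Icc hpm.le le_rfl
  set c : ℝ := Real.sqrt ((m - ξp) * (m - ξm) / (4 * ξ ^ 2)) with hc
  have hcpos : 0 < c := by
    apply Real.sqrt_pos.2
    have h1' : 0 < m - ξp := by linarith
    have h2' : 0 < m - ξm := by linarith
    positivity
  have hptwise : ∀ t ∈ Set.Icc m ξ, c ≤ g t := by
    intro t ht
    have ht1 := ht.1
    have ht2 := ht.2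
    have htpos : 0 < t := lt_of_lt_of_le (hξp.trans hpm) ht1
    apply Real.sqrt_le_sqrt
    apply div_le_div₀ (by nlinarith) (by nlinarith) (by positivity) (by nlinarith)
  have hsub : (ξ - m) * c ≤ ∫ t in m..ξ, g t := by
    have : ∫ t in m..ξ, c = (ξ - m) * c := by
      rw [intervalIntegral.integral_const, smul_eq_mul]
    rw [← this]
    exact intervalIntegral.integral_mono_on hmξ.le intervalIntegrable_const hint2 hptwise
  have hsplit : (∫ t in ξp..ξ, g t) = (∫ t in ξp..m, g t) + ∫ t in m..ξ, g t :=
    (intervalIntegral.integral_add_adjacent_intervals hint1 hint2).symm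
  have hnn : 0 ≤ ∫ t in ξp..m, g t :=
    intervalIntegral.integral_nonneg hpm.le (fun t _ => Real.sqrt_nonneg _)
  have hI : (ξ - m) * c ≤ ∫ t in ξp..ξ, g t := by rw [hsplit]; linarith
  have hIpos : 0 < ∫ t in ξp..ξ, g t := by
    have : 0 < (ξ - m) * c := by
      have : 0 < ξ - m := by linarith
      positivity
    linarith
  have hδ : 0 < 1 - ξm / ξp := by
    rw [sub_pos, div_lt_one hξp]; exact h1
  have hBpos : 0 < 9 / (2 * (1 - ξm / ξp)) := by positivity
  have hmain : (ξ - ξp) * Real.sqrt ((ξ - ξp) * (ξ - ξm) / (4 * ξ ^ 2)) ≤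
      9 / (2 * (1 - ξm / ξp)) * ((ξ - m) * c) := by
    have e1 : (ξ - ξp) * Real.sqrt ((ξ - ξp) * (ξ - ξm) / (4 * ξ ^ 2)) =
        Real.sqrt ((ξ - ξp) ^ 2 * ((ξ - ξp) * (ξ - ξm) / (4 * ξ ^ 2))) := by
      rw [Real.sqrt_mul (by positivity), Real.sqrt_sq (by linarith)]
    have e2 : 9 / (2 * (1 - ξm / ξp)) * ((ξ - m) * c) =
        Real.sqrt ((9 / (2 * (1 - ξm / ξp)) * (ξ - m)) ^ 2 *
          ((m - ξp) * (m - ξm) / (4 * ξ ^ 2))) := by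
      rw [hc, Real.sqrt_mul (by positivity), Real.sqrt_sq (mul_nonneg hBpos.le (by linarith))]
      ring
    rw [e1, e2]
    apply Real.sqrt_le_sqrt
    have hB : 9 / (2 * (1 - ξm / ξp)) = 9 * ξp / (2 * (ξp - ξm)) := by
      rw [div_eq_div_iff (by positivity) (by nlinarith)]
      field_simp
    rw [hB]
    have h4 : (0 : ℝ) < 4 * ξ ^ 2 := by positivity
    rw [← mul_div_assoc, ← mul_div_assoc, div_le_div_iff_of_pos_right h4]
    have hkey : 64 * (ξp - ξm) ^ 2 * (ξ - ξm) ≤ 81 * ξp ^ 2 * (ξp + ξ - 2 * ξm) := by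
      have ha : (ξp - ξm) ^ 2 ≤ ξp ^ 2 := by nlinarith
      have hb : ξ - ξm ≤ ξp + ξ - 2 * ξm := by linarith
      nlinarith [mul_le_mul ha hb (by linarith) (by positivity)]
    have hcube : 0 ≤ (ξ - ξp) ^ 3 := pow_nonneg (by linarith) 3
    rw [hm]
    have h9 : (9 * ξp / (2 * (ξp - ξm)) * (ξ - (ξp + ξ) / 2)) ^ 2 =
        (9 * ξp * (ξ - (ξp + ξ) / 2)) ^ 2 / (2 * (ξp - ξm)) ^ 2 := by
      rw [div_mul_eq_mul_div, div_pow]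
    rw [h9, div_mul_eq_mul_div, le_div_iff₀ (pow_pos (by linarith) 2)]
    linarith [mul_le_mul_of_nonneg_left hkey hcube]
  constructor
  · rw [div_le_iff₀ hIpos]
    calc (ξ - ξp) * Real.sqrt ((ξ - ξp) * (ξ - ξm) / (4 * ξ ^ 2)) ≤
        9 / (2 * (1 - ξm / ξp)) * ((ξ - m) * c) := hmain
      _ ≤ 9 / (2 * (1 - ξm / ξp)) * ∫ t in ξp..ξ, g t :=
        mul_le_mul_of_nonneg_left hI hBpos.le
  · rw [← div_eq_mul_inv, div_le_div_iff₀ hIpos (by linarith)]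
    have h' := hmain.trans (mul_le_mul_of_nonneg_left hI hBpos.le)
    linarith [h']
end

section
/- Using Stirling's formula, the constant β_N = 2^{−(α_N−1)/2} N^{1/4}(n−1)^{1/4} Γ(n)^{1/2} Γ((N+3)/2) / ((N+1) Γ(N+1)^{1/2} Γ((n+1)/2)), with α_N = n − N, satisfies β_N = 1/√2 + O(N^{−1}) as N → ∞ with n > N and n/N → γ ∈ [1,∞). -/
open Filter Asymptotics Real

set_option maxHeartbeats 1000000

lemma wendel_upper {x : ℝ} (hx : 0 < x) :
    Real.Gamma (x + 1/2) ≤ Real.sqrt x * Real.Gamma x := by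
  have h := Real.Gamma_mul_add_mul_le_rpow_Gamma_mul_rpow_Gamma hx
      (by linarith : (0:ℝ) < x + 1) (by norm_num : (0:ℝ) < 1/2)
      (by norm_num : (0:ℝ) < 1/2) (by norm_num)
  have he : (1/2 : ℝ) * x + (1/2) * (x+1) = x + 1/2 := by ring
  rw [he, Real.Gamma_add_one hx.ne'] at h
  have hΓ : 0 < Real.Gamma x := Real.Gamma_pos_of_pos hx
  calc Real.Gamma (x + 1/2) ≤ Real.Gamma x ^ ((1:ℝ)/2) * (x * Real.Gamma x) ^ ((1:ℝ)/2) := h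
    _ = Real.sqrt x * Real.Gamma x := by
        rw [Real.mul_rpow hx.le hΓ.le, ← Real.sqrt_eq_rpow, ← Real.sqrt_eq_rpow]
        linear_combination Real.sqrt x * Real.mul_self_sqrt hΓ.le

lemma wendel_lower {x : ℝ} (hx : 0 < x) :
    x * Real.Gamma x ≤ Real.sqrt (x + 1/2) * Real.Gamma (x + 1/2) := by
  have h := wendel_upper (x := x + 1/2) (by linarith)
  have he : x + 1/2 + 1/2 = x + 1 := by ring
  rw [he, Real.Gamma_add_one hx.ne'] at h
  exact h

lemma beta_bound {M m : ℝ} (hM : 1 ≤ M) (hm : M + 1 ≤ m) :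
    |(2:ℝ) ^ (-((m - M) - 1)/2) * M ^ ((1:ℝ)/4) * (m-1) ^ ((1:ℝ)/4) *
        (Real.Gamma m) ^ ((1:ℝ)/2) * Real.Gamma ((M+3)/2) /
        ((M+1) * (Real.Gamma (M+1)) ^ ((1:ℝ)/2) * Real.Gamma ((m+1)/2)) -
      1 / Real.sqrt 2| ≤ 2 / M := by
  have hM0 : (0:ℝ) < M := by linarith
  have hm0 : (0:ℝ) < m := by linarith
  have hm1 : (0:ℝ) < m - 1 := by linarith
  set a := Real.Gamma (m/2) with ha
  set b := Real.Gamma ((m+1)/2) with hb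
  set c := Real.Gamma ((M+1)/2) with hc
  set d := Real.Gamma ((M+2)/2) with hd
  have hap : 0 < a := Real.Gamma_pos_of_pos (by positivity)
  have hbp : 0 < b := Real.Gamma_pos_of_pos (by positivity)
  have hcp : 0 < c := Real.Gamma_pos_of_pos (by positivity)
  have hdp : 0 < d := Real.Gamma_pos_of_pos (by positivity)
  have hΓm : 0 < Real.Gamma m := Real.Gamma_pos_of_pos hm0
  have hΓM : 0 < Real.Gamma (M+1) := Real.Gamma_pos_of_pos (by linarith)
  -- duplication formulas
  have d1 : a * b = Real.Gamma m * (2:ℝ) ^ (1 - m) * Real.sqrt π := by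
    have h := Real.Gamma_mul_Gamma_add_half (m/2)
    rw [show m/2 + 1/2 = (m+1)/2 by ring, show (2:ℝ)*(m/2) = m by ring, ← ha, ← hb] at h
    exact h
  have d2 : c * d = Real.Gamma (M+1) * (2:ℝ) ^ (-M) * Real.sqrt π := by
    have h := Real.Gamma_mul_Gamma_add_half ((M+1)/2)
    rw [show (M+1)/2 + 1/2 = (M+2)/2 by ring, show (2:ℝ)*((M+1)/2) = M+1 by ring,
      show (1:ℝ) - (M+1) = -M by ring, ← hc, ← hd] at h
    exact h
  have e1 : Real.Gamma ((M+3)/2) = (M+1)/2 * c := by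
    rw [show (M+3)/2 = (M+1)/2 + 1 by ring,
      Real.Gamma_add_one (by positivity : ((M+1)/2 : ℝ) ≠ 0), hc]
  obtain ⟨β, hβ⟩ : ∃ x : ℝ, x = (2:ℝ) ^ (-((m - M) - 1)/2) * M ^ ((1:ℝ)/4) * (m-1) ^ ((1:ℝ)/4) *
      (Real.Gamma m) ^ ((1:ℝ)/2) * Real.Gamma ((M+3)/2) /
      ((M+1) * (Real.Gamma (M+1)) ^ ((1:ℝ)/2) * b) := ⟨_, rfl⟩
  rw [← hβ]
  have hβpos : 0 < β := by
    rw [hβ]; positivity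
  have key : ∀ (x r : ℝ), 0 ≤ x → (x ^ r) ^ 2 = x ^ (r * 2) := by
    intro x r hx
    rw [← Real.rpow_natCast (x ^ r) 2, ← Real.rpow_mul hx]
    norm_num
  have hsq : β^2 = (2:ℝ)^(M+1-m) * Real.sqrt M * Real.sqrt (m-1) * Real.Gamma m *
      ((M+1)/2 * c)^2 / ((M+1)^2 * Real.Gamma (M+1) * b^2) := by
    rw [hβ, e1]
    simp only [div_pow, mul_pow]
    rw [key 2 _ (by norm_num), key M _ hM0.le, key (m-1) _ hm1.le,
      key (Real.Gamma m) _ hΓm.le, key (Real.Gamma (M+1)) _ hΓM.le]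
    rw [show -((m - M) - 1)/2 * 2 = M + 1 - m by ring,
      show (1:ℝ)/4 * 2 = 1/2 by norm_num, show (1:ℝ)/2 * 2 = 1 by norm_num]
    simp only [Real.rpow_one]
    rw [← Real.sqrt_eq_rpow, ← Real.sqrt_eq_rpow]
  have hπ : (0:ℝ) < Real.sqrt π := Real.sqrt_pos.mpr Real.pi_pos
  have hQ : β^2 = Real.sqrt M * Real.sqrt (m-1) * a * c / (4 * b * d) := by
    rw [hsq, div_eq_div_iff (by positivity) (by positivity)]
    have p : (2:ℝ)^(M+1-m) * (2:ℝ)^(-M) = (2:ℝ)^(1-m) := by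
      rw [← Real.rpow_add two_pos]; ring_nf
    have hx : (2:ℝ)^(M+1-m) * Real.Gamma m * (c * d) = (a * b) * Real.Gamma (M+1) := by
      rw [d1, d2]
      linear_combination (Real.Gamma m * Real.Gamma (M+1) * Real.sqrt π) * p
    linear_combination (Real.sqrt M * Real.sqrt (m-1) * (M+1)^2 * c * b) * hx
  -- upper bound : β² ≤ 1/2
  have hup : β^2 ≤ 1/2 := by
    rw [hQ, div_le_iff₀ (by positivity)]
    have w1 := wendel_lower (show (0:ℝ) < m/2 by positivity)
    rw [show m/2 + 1/2 = (m+1)/2 by ring, ← ha, ← hb] at w1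
    have w2 := wendel_lower (show (0:ℝ) < (M+1)/2 by positivity)
    rw [show (M+1)/2 + 1/2 = (M+2)/2 by ring, ← hc, ← hd] at w2
    have t2 : Real.sqrt M * Real.sqrt (m-1) * (Real.sqrt ((m+1)/2) * Real.sqrt ((M+2)/2))
        ≤ (M+1)*m/2 := by
      rw [← Real.sqrt_mul (by positivity), ← Real.sqrt_mul (by positivity),
        ← Real.sqrt_mul (by positivity),
        show (M+1)*m/2 = Real.sqrt (((M+1)*m/2)^2) from (Real.sqrt_sq (by positivity)).symm]
      apply Real.sqrt_le_sqrt
      nlinarith [hm, hM0, hm1, sq_nonneg (M+1), sq_nonneg m]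
    have t1 : (m*(M+1)/4) * ((Real.sqrt M * Real.sqrt (m-1)) * (a*c)) ≤
        ((M+1)*m/2) * (b*d) := by
      have h := mul_le_mul_of_nonneg_left
        (mul_le_mul w1 w2 (by positivity) (by positivity))
        (show (0:ℝ) ≤ Real.sqrt M * Real.sqrt (m-1) by positivity)
      calc (m*(M+1)/4) * ((Real.sqrt M * Real.sqrt (m-1)) * (a*c))
          = (Real.sqrt M * Real.sqrt (m-1)) * ((m/2*a) * ((M+1)/2*c)) := by ring
        _ ≤ (Real.sqrt M * Real.sqrt (m-1)) *
              ((Real.sqrt ((m+1)/2)*b) * (Real.sqrt ((M+2)/2)*d)) := h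
        _ = (Real.sqrt M * Real.sqrt (m-1) * (Real.sqrt ((m+1)/2) * Real.sqrt ((M+2)/2)))
              * (b*d) := by ring
        _ ≤ ((M+1)*m/2) * (b*d) :=
            mul_le_mul_of_nonneg_right t2 (le_of_lt (mul_pos hbp hdp))
    have hq : (4:ℝ) ≤ m * (M+1) := by nlinarith
    have final : Real.sqrt M * Real.sqrt (m-1) * (a*c) ≤ 2*(b*d) := by
      by_contra hcon
      push_neg at hcon
      have h2 := mul_lt_mul_of_pos_left hcon
        (show (0:ℝ) < m*(M+1)/4 by positivity)
      linarith [t1, h2]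
    linarith [final]
  -- lower bound : 1/2 - 1/M ≤ β²
  have hlow : 1/2 - 1/M ≤ β^2 := by
    rcases le_or_gt M 2 with hM2 | hM2
    · have h12 : (1:ℝ)/2 ≤ 1/M := by
        apply one_div_le_one_div_of_le hM0 hM2
      nlinarith [sq_nonneg β]
    · rw [hQ, le_div_iff₀ (by positivity)]
      have w3 := wendel_upper (show (0:ℝ) < m/2 by positivity)
      rw [show m/2 + 1/2 = (m+1)/2 by ring, ← ha, ← hb] at w3
      have w4 := wendel_upper (show (0:ℝ) < (M+1)/2 by positivity)
      rw [show (M+1)/2 + 1/2 = (M+2)/2 by ring, ← hc, ← hd] at w4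
      have t3 : b * d ≤ (Real.sqrt (m/2) * Real.sqrt ((M+1)/2)) * (a * c) := by
        calc b * d ≤ (Real.sqrt (m/2) * a) * (Real.sqrt ((M+1)/2) * c) :=
              mul_le_mul w3 w4 hdp.le (by positivity)
          _ = (Real.sqrt (m/2) * Real.sqrt ((M+1)/2)) * (a * c) := by ring
      have t4 : (1 - 2/M) * Real.sqrt (m*(M+1)) ≤ Real.sqrt (M*(m-1)) := by
        have h20 : (0:ℝ) ≤ 1 - 2/M := by
          rw [sub_nonneg, div_le_one hM0]; linarith
        rw [show (1 - 2/M) * Real.sqrt (m*(M+1))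
            = Real.sqrt ((1-2/M)^2 * (m*(M+1))) by
          rw [Real.sqrt_mul (sq_nonneg _), Real.sqrt_sq h20]]
        apply Real.sqrt_le_sqrt
        have h2 : (1-2/M)^2 * (m*(M+1)) * M^2 ≤ (M*(m-1)) * M^2 := by
          have e : (1-2/M)^2 * (m*(M+1)) * M^2 = (M-2)^2 * (m*(M+1)) := by
            field_simp
          rw [e]; nlinarith [hM2, hm, hM0]
        exact le_of_mul_le_mul_right h2 (by positivity)
      have h4 : Real.sqrt 4 = 2 := by
        rw [show (4:ℝ) = 2^2 by norm_num]
        exact Real.sqrt_sq (by norm_num)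
      have e2 : Real.sqrt (m/2) * Real.sqrt ((M+1)/2) = Real.sqrt (m*(M+1))/2 := by
        rw [← Real.sqrt_mul (by positivity),
          show m/2*((M+1)/2) = (m*(M+1))/4 by ring,
          Real.sqrt_div (by positivity), h4]
      have hhalf : (0:ℝ) ≤ 1/2 - 1/M := by
        rw [sub_nonneg, div_le_div_iff₀ hM0 (by norm_num)]
        linarith
      calc (1/2 - 1/M) * (4*b*d)
          = (1/2 - 1/M) * (4*(b*d)) := by ring
        _ ≤ (1/2 - 1/M) * (4*((Real.sqrt (m/2) * Real.sqrt ((M+1)/2)) * (a*c))) := by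
            apply mul_le_mul_of_nonneg_left ?_ hhalf
            apply mul_le_mul_of_nonneg_left t3 (by norm_num)
        _ = ((1 - 2/M) * Real.sqrt (m*(M+1))) * (a*c) := by rw [e2]; ring
        _ ≤ Real.sqrt (M*(m-1)) * (a*c) :=
            mul_le_mul_of_nonneg_right t4 (by positivity)
        _ = Real.sqrt M * Real.sqrt (m-1) * a * c := by
            rw [Real.sqrt_mul hM0.le]; ring
  -- conclude
  have hc2 : (1/Real.sqrt 2)^2 = 1/2 := by
    rw [div_pow, one_pow, Real.sq_sqrt (by norm_num : (0:ℝ) ≤ 2)]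
  have hs2 : Real.sqrt 2 ≤ 2 := by
    nlinarith [Real.sq_sqrt (show (0:ℝ) ≤ 2 by norm_num), Real.sqrt_nonneg 2]
  have hch : (1:ℝ)/2 ≤ 1/Real.sqrt 2 :=
    one_div_le_one_div_of_le (Real.sqrt_pos.mpr two_pos) hs2
  have hM' : (0:ℝ) < 1/M := by positivity
  have hβc : 0 < β + 1/Real.sqrt 2 := by linarith
  have hcb : (1:ℝ)/2 ≤ β + 1/Real.sqrt 2 := by linarith
  have hble : β ≤ 1/Real.sqrt 2 := by
    by_contra hgt
    push_neg at hgt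
    have h := mul_pos (sub_pos.mpr hgt) hβc
    nlinarith [h, hup, hc2]
  rw [abs_le]
  constructor
  · by_contra hgt
    push_neg at hgt
    have p1 : (2/M) * (β + 1/Real.sqrt 2) < (1/Real.sqrt 2 - β) * (β + 1/Real.sqrt 2) :=
      mul_lt_mul_of_pos_right (by linarith) hβc
    have p0 : (0:ℝ) ≤ 2/M := by positivity
    have p2 : (2/M) * (1/2) ≤ (2/M) * (β + 1/Real.sqrt 2) :=
      mul_le_mul_of_nonneg_left hcb p0
    have hqe : 2/M * (1/2) = 1/M := by ring
    nlinarith [p1, p2, hlow, hc2, hqe]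
  · linarith [hble, show (0:ℝ) < 2/M by positivity]

/-- The constant
`β_N = 2^{−(α_N−1)/2} N^{1/4}(n−1)^{1/4} Γ(n)^{1/2} Γ((N+3)/2) / ((N+1)Γ(N+1)^{1/2}Γ((n+1)/2))`,
with `α_N = n − N`, satisfies `β_N = 1/√2 + O(N⁻¹)` in the regime `n > N`,
`n/N → γ ∈ [1,∞)`. -/
theorem beta_N_asymptotics (n : ℕ → ℕ) (γ : ℝ) (hγ : 1 ≤ γ)
    (hn : ∀ N, N < n N)
    (hlim : Tendsto (fun N : ℕ => (n N : ℝ) / N) atTop (nhds γ)) :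
    (fun N : ℕ =>
        (2 : ℝ) ^ (-(((n N : ℝ) - N) - 1) / 2) * (N : ℝ) ^ ((1 : ℝ) / 4) *
            ((n N : ℝ) - 1) ^ ((1 : ℝ) / 4) * (Real.Gamma (n N : ℝ)) ^ ((1 : ℝ) / 2) *
            Real.Gamma (((N : ℝ) + 3) / 2) /
            (((N : ℝ) + 1) * (Real.Gamma ((N : ℝ) + 1)) ^ ((1 : ℝ) / 2) *
              Real.Gamma (((n N : ℝ) + 1) / 2)) -
          1 / Real.sqrt 2)
      =O[atTop] (fun N : ℕ => (N : ℝ)⁻¹) := by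
  rw [isBigO_iff]
  refine ⟨2, ?_⟩
  filter_upwards [eventually_ge_atTop 1] with N hN
  have hM : (1:ℝ) ≤ (N:ℝ) := by exact_mod_cast hN
  have hm : (N:ℝ) + 1 ≤ (n N : ℝ) := by exact_mod_cast Nat.succ_le_of_lt (hn N)
  have h := beta_bound hM hm
  have h2 : ‖(N:ℝ)⁻¹‖ = (N:ℝ)⁻¹ := by
    rw [Real.norm_eq_abs, abs_of_nonneg (by positivity)]
  rw [Real.norm_eq_abs, h2, show (2:ℝ) * (N:ℝ)⁻¹ = 2/(N:ℝ) by ring]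
  exact h
end

section
/- Let A, B be 2×2 matrices of Hilbert–Schmidt operators with trace class diagonal entries, and define det(I−T) = det₂(I−T)·exp(−tr T), where det₂ is the regularized 2-determinant and tr T = tr T₁₁ + tr T₂₂. If Σᵢ‖Aᵢᵢ−Bᵢᵢ‖₁ + Σ_{i≠j}‖Aᵢⱼ−Bᵢⱼ‖₂ ≤ 1/2, then |det(I−A) − det(I−B)| ≤ M(B)·(Σᵢ‖Aᵢᵢ−Bᵢᵢ‖₁ + Σ_{i≠j}‖Aᵢⱼ−Bᵢⱼ‖₂), where M(B) = 2|det(I−B)| + 2 exp[2(1+‖B‖₂)² + Σᵢ‖Bᵢᵢ‖₁]. -/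
/-- Lipschitz bound for determinants of `2×2` operator matrices (Proposition on
`det(I−T) = det₂(I−T) e^{−tr T}`).  Since trace-class operators and regularized
determinants are not available in Mathlib, the statement is formalized through the
numerical data attached to the operators `A`, `B`: `det2A = det₂(I−A)`,
`det2B = det₂(I−B)`, the traces `trA`, `trB`, the Hilbert–Schmidt norms `hsA = ‖A‖₂`,
`hsB = ‖B‖₂`, `hsAB = ‖A−B‖₂`, the trace norms `nd i = ‖Aᵢᵢ−Bᵢᵢ‖₁`,
`no = Σ_{i≠j} ‖Aᵢⱼ−Bᵢⱼ‖₂`, `nB i = ‖Bᵢᵢ‖₁`, together with the standard facts relating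
them (the `det₂` Lipschitz bound, `‖A−B‖₂ ≤ Σ‖Aᵢᵢ−Bᵢᵢ‖₁ + Σ‖Aᵢⱼ−Bᵢⱼ‖₂`,
`|tr X| ≤ Σ‖Xᵢᵢ‖₁`).  The conclusion is the claimed bound with
`M(B) = 2|det(I−B)| + 2 exp[2(1+‖B‖₂)² + Σᵢ‖Bᵢᵢ‖₁]`. -/
theorem det_lipschitz_bound
    (det2A det2B trA trB hsA hsB hsAB : ℝ) (nd nB : Fin 2 → ℝ) (no : ℝ)
    (hhsA : 0 ≤ hsA) (hhsB : 0 ≤ hsB) (hhsAB : 0 ≤ hsAB)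
    (hnd : ∀ i, 0 ≤ nd i) (hnB : ∀ i, 0 ≤ nB i) (hno : 0 ≤ no)
    (h_hs_le : hsAB ≤ nd 0 + nd 1 + no)
    (h_hsA_le : hsA ≤ hsB + hsAB)
    (h_det2 : |det2A - det2B| ≤ hsAB * Real.exp (1 / 2 * (1 + hsA + hsB) ^ 2))
    (h_tr_diff : |trA - trB| ≤ nd 0 + nd 1)
    (h_trB : |trB| ≤ nB 0 + nB 1)
    (h_small : nd 0 + nd 1 + no ≤ 1 / 2) :
    |det2A * Real.exp (-trA) - det2B * Real.exp (-trB)| ≤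
      (2 * |det2B * Real.exp (-trB)| +
          2 * Real.exp (2 * (1 + hsB) ^ 2 + (nB 0 + nB 1))) *
        (nd 0 + nd 1 + no) := by
  have hd0 := hnd 0; have hd1 := hnd 1
  have hB0 := hnB 0; have hB1 := hnB 1
  set δ := nd 0 + nd 1 + no with hδ
  have hδ0 : 0 ≤ δ := by linarith
  have h1 : Real.exp (-trB) * Real.exp (trB - trA) = Real.exp (-trA) := by
    rw [← Real.exp_add]; ring_nf
  have key : det2A * Real.exp (-trA) - det2B * Real.exp (-trB)
      = (det2A - det2B) * Real.exp (-trA)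
        + det2B * Real.exp (-trB) * (Real.exp (trB - trA) - 1) := by
    linear_combination (-det2B) * h1
  have habs : |det2A * Real.exp (-trA) - det2B * Real.exp (-trB)|
      ≤ |det2A - det2B| * Real.exp (-trA)
        + |det2B * Real.exp (-trB)| * |Real.exp (trB - trA) - 1| := by
    rw [key]
    refine (abs_add_le _ _).trans ?_
    rw [abs_mul, abs_mul, abs_of_pos (Real.exp_pos _)]
  -- bound the first term
  have htrA : -trA ≤ nB 0 + nB 1 + 1/2 := by
    have := abs_le.1 h_trB
    have := abs_le.1 h_tr_diff
    linarith
  have hsq : 1 / 2 * (1 + hsA + hsB) ^ 2 ≤ 2 * (1 + hsB) ^ 2 := by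
    have hA' : hsA ≤ hsB + 1/2 := by linarith
    nlinarith [sq_nonneg (1 + hsA + hsB), sq_nonneg (1 + hsB - hsA)]
  have hexp2 : Real.exp (1/2) < 2 := by
    have hlog : (1:ℝ)/2 < Real.log 2 := by linarith [Real.log_two_gt_d9]
    calc Real.exp (1/2) < Real.exp (Real.log 2) := Real.exp_lt_exp.mpr hlog
      _ = 2 := Real.exp_log two_pos
  have hE1 : |det2A - det2B| * Real.exp (-trA)
      ≤ 2 * Real.exp (2 * (1 + hsB) ^ 2 + (nB 0 + nB 1)) * δ := by
    have t1 : |det2A - det2B| * Real.exp (-trA)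
        ≤ (hsAB * Real.exp (1 / 2 * (1 + hsA + hsB) ^ 2)) * Real.exp (-trA) :=
      mul_le_mul_of_nonneg_right h_det2 (Real.exp_pos _).le
    have t2 : Real.exp (1 / 2 * (1 + hsA + hsB) ^ 2) * Real.exp (-trA)
        ≤ Real.exp (2 * (1 + hsB) ^ 2 + (nB 0 + nB 1)) * 2 := by
      rw [← Real.exp_add]
      calc Real.exp (1 / 2 * (1 + hsA + hsB) ^ 2 + -trA)
          ≤ Real.exp (2 * (1 + hsB) ^ 2 + (nB 0 + nB 1) + 1/2) :=
            Real.exp_le_exp.mpr (by linarith)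
        _ = Real.exp (2 * (1 + hsB) ^ 2 + (nB 0 + nB 1)) * Real.exp (1/2) := by
            rw [← Real.exp_add]
        _ ≤ _ := by
            have := (Real.exp_pos (2 * (1 + hsB) ^ 2 + (nB 0 + nB 1))).le
            nlinarith
    calc |det2A - det2B| * Real.exp (-trA)
        ≤ hsAB * (Real.exp (1 / 2 * (1 + hsA + hsB) ^ 2) * Real.exp (-trA)) := by
          rw [← mul_assoc]; exact t1
      _ ≤ δ * (Real.exp (2 * (1 + hsB) ^ 2 + (nB 0 + nB 1)) * 2) := by
          apply mul_le_mul h_hs_le t2 (by positivity) hδ0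
      _ = 2 * Real.exp (2 * (1 + hsB) ^ 2 + (nB 0 + nB 1)) * δ := by ring
  -- bound the second term
  have hE2 : |det2B * Real.exp (-trB)| * |Real.exp (trB - trA) - 1|
      ≤ 2 * |det2B * Real.exp (-trB)| * δ := by
    have hsmall : |trB - trA| ≤ 1 := by
      rw [abs_sub_comm]; linarith [h_tr_diff]
    have h2 : |Real.exp (trB - trA) - 1| ≤ 2 * |trB - trA| :=
      Real.abs_exp_sub_one_le hsmall
    have h3 : |trB - trA| ≤ δ := by rw [abs_sub_comm]; linarith
    calc |det2B * Real.exp (-trB)| * |Real.exp (trB - trA) - 1|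
        ≤ |det2B * Real.exp (-trB)| * (2 * δ) := by
          apply mul_le_mul_of_nonneg_left _ (abs_nonneg _)
          linarith
      _ = 2 * |det2B * Real.exp (-trB)| * δ := by ring
  calc |det2A * Real.exp (-trA) - det2B * Real.exp (-trB)|
      ≤ |det2A - det2B| * Real.exp (-trA)
        + |det2B * Real.exp (-trB)| * |Real.exp (trB - trA) - 1| := habs
    _ ≤ 2 * Real.exp (2 * (1 + hsB) ^ 2 + (nB 0 + nB 1)) * δ
        + 2 * |det2B * Real.exp (-trB)| * δ := add_le_add hE1 hE2
    _ = (2 * |det2B * Real.exp (-trB)|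
        + 2 * Real.exp (2 * (1 + hsB) ^ 2 + (nB 0 + nB 1))) * δ := by ring
end
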